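/- Let m and n be coprime integers with 1 < m < n, let H be the (m,n)-Horadam sequence, and let (q_l, …, q_0) be the quotient sequence of (m, n). Then for every integer j ≥ 1, the quotient sequence of the pair (H_j, H_{j+1}) is (1, 1, …, 1, q_l, …, q_0), consisting of exactly j initial entries equal to 1 followed by the quotient sequence of (m, n). -/
import Mathlib


/-- The `(m,n)`-Horadam sequence: `H 0 = m`, `H 1 = n`, `H k = H (k-1) + H (k-2)`. -/
def horadam (m n : ℤ) : ℕ → ℤ
  | 0 => m
  | 1 => n
  | k + 2 => horadam m n (k + 1) + horadam m n k

/-- `(l, q, ρ)` records the Euclidean algorithm for the pair `(m, n)` run down to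
remainder `1`: the remainders are `ρ (l+2) = n`, `ρ (l+1) = m`, `ρ l, …, ρ 0 = 1`,
with quotients `q l, …, q 0 ≥ 1` satisfying `ρ (i+2) = q i * ρ (i+1) + ρ i` and
`0 < ρ i < ρ (i+1)` for all `i ≤ l`. -/
def IsQuotSeq (m n : ℤ) (l : ℕ) (q ρ : ℕ → ℤ) : Prop :=
  ρ (l + 2) = n ∧ ρ (l + 1) = m ∧ ρ 0 = 1 ∧
    ∀ i ≤ l, 1 ≤ q i ∧ ρ (i + 2) = q i * ρ (i + 1) + ρ i ∧ 0 < ρ i ∧ ρ i < ρ (i + 1)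

lemma horadam_rec (m n : ℤ) (k : ℕ) :
    horadam m n (k + 2) = horadam m n (k + 1) + horadam m n k := rfl

lemma horadam_pos (m n : ℤ) (hm : 0 < m) (hn : 0 < n) : ∀ k, 0 < horadam m n k := by
  intro k
  induction k using Nat.strong_induction_on with
  | _ k ih =>
    match k with
    | 0 => exact hm
    | 1 => exact hn
    | k + 2 =>
      have h1 := ih k (by omega)
      have h2 := ih (k + 1) (by omega)
      rw [horadam_rec]; linarith

lemma horadam_lt (m n : ℤ) (hm : 0 < m) (hmn : m < n) :
    ∀ k, horadam m n k < horadam m n (k + 1) := by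
  intro k
  match k with
  | 0 => exact hmn
  | k + 1 =>
    have := horadam_pos m n hm (lt_trans hm hmn) (k + 1)
    have := horadam_pos m n hm (lt_trans hm hmn) k
    rw [horadam_rec]; linarith

lemma div_uniq {a a' b r r' : ℤ} (hb : 0 < b) (h : a * b + r = a' * b + r')
    (hr0 : 0 ≤ r) (hrb : r < b) (hr0' : 0 ≤ r') (hrb' : r' < b) : a = a' ∧ r = r' := by
  have ha : a = a' := by
    rcases lt_trichotomy a a' with h1 | h1 | h1
    · exfalso; have h2 : a + 1 ≤ a' := h1; nlinarith
    · exact h1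
    · exfalso; have h2 : a' + 1 ≤ a := h1; nlinarith
  subst ha
  exact ⟨rfl, by linarith⟩

lemma one_lt_rho {m n : ℤ} {l : ℕ} {q ρ : ℕ → ℤ} (h : IsQuotSeq m n l q ρ) :
    ∀ i, 1 ≤ i → i ≤ l → 1 < ρ i := by
  obtain ⟨-, -, h0, hrec⟩ := h
  intro i
  induction i with
  | zero => omega
  | succ i ih =>
    intro _ hi
    have hc := hrec i (by omega)
    rcases Nat.eq_zero_or_pos i with h' | h'
    · subst h'; rw [h0] at hc; linarith [hc.2.2.2]
    · have := ih (by omega) (by omega)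
      linarith [hc.2.2.2]

lemma quotseq_uniq : ∀ l l' : ℕ, ∀ m n : ℤ, ∀ q ρ q' ρ' : ℕ → ℤ,
    IsQuotSeq m n l q ρ → IsQuotSeq m n l' q' ρ' →
    l = l' ∧ ∀ i ≤ l, q i = q' i := by
  intro l
  induction l using Nat.strong_induction_on with
  | _ l ih =>
    intro l' m n q ρ q' ρ' h h'
    obtain ⟨hn, hm, h0, hrec⟩ := h
    obtain ⟨hn', hm', h0', hrec'⟩ := h'
    have htop := hrec l le_rfl
    have htop' := hrec' l' le_rfl
    have hmpos : 0 < m := by rw [← hm]; linarith [htop.2.2.1, htop.2.2.2]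
    have e1 : q l * m + ρ l = n := by rw [← hn, htop.2.1, hm]
    have e2 : q' l' * m + ρ' l' = n := by rw [← hn', htop'.2.1, hm']
    have hdu := div_uniq hmpos (e1.trans e2.symm) (le_of_lt htop.2.2.1)
        (by rw [← hm]; exact htop.2.2.2) (le_of_lt htop'.2.2.1)
        (by rw [← hm']; exact htop'.2.2.2)
    rcases Nat.eq_zero_or_pos l with hl0 | hlpos
    · subst hl0
      have hr1 : ρ' l' = 1 := by rw [← hdu.2, h0]
      have hl'0 : l' = 0 := by
        by_contra hc
        have := one_lt_rho ⟨hn', hm', h0', hrec'⟩ l' (by omega) le_rfl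
        linarith
      subst hl'0
      refine ⟨rfl, fun i hi => ?_⟩
      interval_cases i
      exact hdu.1
    · have hl'pos : 0 < l' := by
        by_contra hc
        have hl'0 : l' = 0 := by omega
        have h1 : 1 < ρ l := one_lt_rho ⟨hn, hm, h0, hrec⟩ l hlpos le_rfl
        rw [hdu.2, hl'0, h0'] at h1
        linarith
      have hsub : IsQuotSeq (ρ l) m (l - 1) q ρ := by
        refine ⟨?_, ?_, h0, fun i hi => hrec i (by omega)⟩
        · have e : l - 1 + 2 = l + 1 := by omega
          rw [e, hm]
        · have e : l - 1 + 1 = l := by omega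
          rw [e]
      have hsub' : IsQuotSeq (ρ l) m (l' - 1) q' ρ' := by
        refine ⟨?_, ?_, h0', fun i hi => hrec' i (by omega)⟩
        · have e : l' - 1 + 2 = l' + 1 := by omega
          rw [e, hm']
        · have e : l' - 1 + 1 = l' := by omega
          rw [e, ← hdu.2]
      have hmain := ih (l - 1) (by omega) (l' - 1) (ρ l) m q ρ q' ρ' hsub hsub'
      have hll' : l = l' := by omega
      subst hll'
      refine ⟨rfl, fun i hi => ?_⟩
      rcases eq_or_lt_of_le hi with he | hlt
      · rw [he]; exact hdu.1
      · exact hmain.2 i (by omega)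

lemma quotseq_shift (m n : ℤ) (hm : 0 < m) (hmn : m < n) (l : ℕ) (q ρ : ℕ → ℤ)
    (h : IsQuotSeq m n l q ρ) (j : ℕ) (hj : 1 ≤ j) :
    IsQuotSeq (horadam m n j) (horadam m n (j + 1)) (l + j)
      (fun i => if i ≤ l then q i else 1)
      (fun i => if i ≤ l + 1 then ρ i else horadam m n (i - (l + 1))) := by
  obtain ⟨hn, hmm, h0, hrec⟩ := h
  have hH0 : horadam m n 0 = m := rfl
  have hH1 : horadam m n 1 = n := rfl
  have hnpos : 0 < n := lt_trans hm hmn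
  refine ⟨?_, ?_, ?_, ?_⟩
  · have : ¬ (l + j + 2 ≤ l + 1) := by omega
    simp only [this, if_false]
    congr 1
    omega
  · have : ¬ (l + j + 1 ≤ l + 1) := by omega
    simp only [this, if_false]
    congr 1
    omega
  · simp only [Nat.zero_le, if_true]; exact h0
  · intro i hi
    rcases le_or_gt i l with hil | hil
    · have e1 : i ≤ l + 1 := by omega
      have e2 : i + 1 ≤ l + 1 := by omega
      have hc := hrec i hil
      refine ⟨by simp [hil]; exact hc.1, ?_, by simp [e1]; exact hc.2.2.1,
        by simp [e1, e2]; exact hc.2.2.2⟩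
      simp only [hil, if_true, e1, e2]
      rcases le_or_gt (i + 2) (l + 1) with e3 | e3
      · simp only [e3, if_true]; exact hc.2.1
      · have hiL : i = l := by omega
        subst hiL
        have e4 : ¬ (i + 2 ≤ i + 1) := by omega
        simp only [e4, if_false]
        have e5 : i + 2 - (i + 1) = 1 := by omega
        rw [e5, hH1, ← hn, hc.2.1]
    · have e1 : ¬ (i + 1 ≤ l + 1) := by omega
      have e2 : ¬ (i + 2 ≤ l + 1) := by omega
      have e3 : ¬ (i ≤ l) := by omega
      refine ⟨by simp [e3], ?_, ?_, ?_⟩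
      · simp only [e3, if_false, e1, e2, if_false, one_mul]
        rcases le_or_gt i (l + 1) with e4 | e4
        · have hiL : i = l + 1 := by omega
          simp only [hiL, le_refl, if_true]
          have f1 : l + 1 + 2 - (l + 1) = 2 := by omega
          have f2 : l + 1 + 1 - (l + 1) = 1 := by omega
          rw [f1, f2, hH1, hmm, horadam_rec, hH1, hH0]
        · have e5 : ¬ (i ≤ l + 1) := by omega
          simp only [e5, if_false]
          obtain ⟨t, rfl⟩ : ∃ t, i = l + 2 + t := ⟨i - (l + 2), by omega⟩
          have f1 : l + 2 + t + 2 - (l + 1) = t + 3 := by omega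
          have f2 : l + 2 + t + 1 - (l + 1) = t + 2 := by omega
          have f3 : l + 2 + t - (l + 1) = t + 1 := by omega
          rw [f1, f2, f3, horadam_rec]
      · rcases le_or_gt i (l + 1) with e4 | e4
        · have hiL : i = l + 1 := by omega
          simp only [hiL, le_refl, if_true, hmm]
          exact hm
        · have e5 : ¬ (i ≤ l + 1) := by omega
          simp only [e5, if_false]
          exact horadam_pos m n hm hnpos _
      · simp only [e1, if_false]
        rcases le_or_gt i (l + 1) with e4 | e4
        · have hiL : i = l + 1 := by omega
          simp only [hiL, le_refl, if_true, hmm]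
          have f1 : l + 1 + 1 - (l + 1) = 1 := by omega
          rw [f1, hH1]; exact hmn
        · have e5 : ¬ (i ≤ l + 1) := by omega
          simp only [e5, if_false]
          have f1 : i + 1 - (l + 1) = (i - (l + 1)) + 1 := by omega
          rw [f1]
          exact horadam_lt m n hm hmn _

theorem quotSeq_of_horadam_pair (m n : ℤ) (hm : 1 < m) (hmn : m < n)
    (hcop : IsCoprime m n) (l : ℕ) (q ρ : ℕ → ℤ) (hqs : IsQuotSeq m n l q ρ)
    (j : ℕ) (hj : 1 ≤ j) (l' : ℕ) (q' ρ' : ℕ → ℤ)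
    (hqs' : IsQuotSeq (horadam m n j) (horadam m n (j + 1)) l' q' ρ') :
    l' = l + j ∧ (∀ i ≤ l, q' i = q i) ∧ (∀ i : ℕ, l < i → i ≤ l + j → q' i = 1) := by
  have hshift := quotseq_shift m n (by linarith) hmn l q ρ hqs j hj
  have huniq := quotseq_uniq (l + j) l' (horadam m n j) (horadam m n (j + 1))
    _ _ q' ρ' hshift hqs'
  refine ⟨huniq.1.symm, fun i hi => ?_, fun i hi1 hi2 => ?_⟩
  · have := (huniq.2 i (by omega)).symm
    simpa [hi] using this
  · have := (huniq.2 i (by omega)).symm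
    have e : ¬ (i ≤ l) := by omega
    simpa [e] using this
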